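/- arXiv:2512.08159 — 2 statements merged into one kernel-verified Lean document; each statement's English description precedes it below -/
import Mathlib

section
/- For any open interval I and continuous f : X → ℝ, the quotient map q_f induces a bijection from the set of connected components of f⁻¹(I) to the set of connected components of f̃⁻¹(I) in the Reeb graph, natural with respect to inclusions of open intervals I ⊆ J. -/
open CategoryTheory Set
open scoped NNReal ENNReal

/-- The Reeb relation of `f : X → ℝ`: `x ∼_f y` iff `y` lies in the connected
component of `x` inside the level set `f ⁻¹' {f x}`. -/
def ReebRel {X : Type*} [TopologicalSpace X] (f : X → ℝ) (x y : X) : Prop :=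
  y ∈ connectedComponentIn (f ⁻¹' {f x}) x

theorem ReebRel.apply_eq {X : Type*} [TopologicalSpace X] {f : X → ℝ} {x y : X}
    (h : ReebRel f x y) : f x = f y :=
  (show f y = f x from connectedComponentIn_subset (f ⁻¹' {f x}) x h).symm

/-- The function induced by `f` on the Reeb quotient. -/
def reebTilde {X : Type*} [TopologicalSpace X] (f : X → ℝ) : Quot (ReebRel f) → ℝ :=
  Quot.lift f fun _ _ h => h.apply_eq

/-- The poset of nonempty open intervals `(a, b)` of `ℝ`, ordered by inclusion. -/
def RInt : Type := {p : ℝ × ℝ // p.1 < p.2}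

namespace RInt

instance : Preorder RInt where
  le I J := J.1.1 ≤ I.1.1 ∧ I.1.2 ≤ J.1.2
  le_refl I := ⟨le_refl _, le_refl _⟩
  le_trans I J K h h' := ⟨h'.1.trans h.1, h.2.trans h'.2⟩

/-- The underlying open interval `(a, b) ⊆ ℝ`. -/
def set (I : RInt) : Set ℝ := Set.Ioo I.1.1 I.1.2

theorem set_mono {I J : RInt} (h : I ≤ J) : I.set ⊆ J.set :=
  Set.Ioo_subset_Ioo h.1 h.2

/-- The `δ`-thickening `(a - δ, b + δ)` of the open interval `(a, b)`. -/
def widen (δ : ℝ≥0) (I : RInt) : RInt :=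
  ⟨(I.1.1 - δ, I.1.2 + δ), by
    have h := I.2
    have h0 : (0 : ℝ) ≤ δ := δ.2
    dsimp only
    linarith⟩

theorem widen_mono (δ : ℝ≥0) : Monotone (widen δ) := by
  intro I J h
  exact ⟨by dsimp [widen]; linarith [h.1], by dsimp [widen]; linarith [h.2]⟩

theorem le_widen (δ : ℝ≥0) (I : RInt) : I ≤ widen δ I := by
  have h0 : (0 : ℝ) ≤ δ := δ.2
  exact ⟨by dsimp [widen]; linarith, by dsimp [widen]; linarith⟩

end RInt

/-- The widening functor `ω_δ` sending `(a, b)` to `(a - δ, b + δ)`. -/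
def widenFunctor (δ : ℝ≥0) : RInt ⥤ RInt := (RInt.widen_mono δ).functor

/-- Two functors `C, D : Int ⥤ 𝒜` are `δ`-interleaved if there are natural
transformations `Φ : C ⟶ D ∘ ω_δ` and `Ψ : D ⟶ C ∘ ω_δ` whose composites are
the maps induced by the inclusions `I ⊆ ω_δ (ω_δ I) = ω_{2δ} I`. -/
def IsInterleaving {A : Type*} [Category A] (δ : ℝ≥0) (C D : RInt ⥤ A) : Prop :=
  ∃ (Φ : C ⟶ widenFunctor δ ⋙ D) (Ψ : D ⟶ widenFunctor δ ⋙ C),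
    (∀ I : RInt, Φ.app I ≫ Ψ.app ((widenFunctor δ).obj I) =
      C.map (homOfLE ((RInt.le_widen δ I).trans (RInt.le_widen δ (RInt.widen δ I))))) ∧
    (∀ I : RInt, Ψ.app I ≫ Φ.app ((widenFunctor δ).obj I) =
      D.map (homOfLE ((RInt.le_widen δ I).trans (RInt.le_widen δ (RInt.widen δ I)))))

/-- The interleaving distance between two functors on the poset of open intervals. -/
noncomputable def interleavingDist {A : Type*} [Category A] (C D : RInt ⥤ A) : ℝ≥0∞ :=
  ⨅ (δ : ℝ≥0) (_ : IsInterleaving δ C D), (δ : ℝ≥0∞)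

/-- The Reeb precosheaf `𝒟(X, f)`, sending an open interval `I` to the set of
connected components of `f ⁻¹' I`, with maps induced by inclusions. -/
def reebPrecosheaf {X : Type u} [TopologicalSpace X] (f : X → ℝ) : RInt ⥤ Type u where
  obj I := ConnectedComponents ↥(f ⁻¹' I.set)
  map {I J} h :=
    TypeCat.ofHom
      (continuous_inclusion (Set.preimage_mono (RInt.set_mono h.le))).connectedComponentsMap
  map_id I := by
    apply ConcreteCategory.hom_ext
    intro c
    obtain ⟨x, rfl⟩ := ConnectedComponents.surjective_coe c
    rfl
  map_comp {I J K} h h' := by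
    apply ConcreteCategory.hom_ext
    intro c
    obtain ⟨x, rfl⟩ := ConnectedComponents.surjective_coe c
    rfl


/-!
The Reeb quotient map `q_f : X → X/∼_f` is a quotient map whose fibres are connected, each one
being a connected component of a level set of `f`. Since `f = f̃ ∘ q_f`, the set `f⁻¹(I)` is
the full preimage under `q_f` of the open set `f̃⁻¹(I)`, so the restriction of `q_f` to it is
again a quotient map with connected fibres, and such a map induces a bijection on connected
components. These bijections commute with the maps induced by inclusions already on points.
-/

open Topology

theorem Topology.IsCoinducing.connectedComponentsMap_restrictPreimage_bijective
    {X Y : Type*} [TopologicalSpace X] [TopologicalSpace Y] {g : X → Y} (hg : IsCoinducing g)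
    {s : Set Y} (hs : IsOpen s) (hfib : ∀ y ∈ s, IsConnected (g ⁻¹' {y})) :
    (hg.restrictPreimage_of_isOpen hs).continuous.connectedComponentsMap.Bijective := by
  refine (hg.restrictPreimage_of_isOpen hs).connectedComponentsMap_bijective fun y ↦ ?_
  have himage : Subtype.val '' (s.restrictPreimage g ⁻¹' {y}) = g ⁻¹' {y.1} := by
    rw [Set.image_val_preimage_restrictPreimage, Set.image_singleton]
  have h := hfib y y.2
  rw [← himage] at h
  exact ⟨h.nonempty.of_image, IsInducing.subtypeVal.isPreconnected_image.mp h.2⟩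

section Reeb

variable {X : Type*} [TopologicalSpace X] (f : X → ℝ)

theorem ReebRel.equivalence : Equivalence (ReebRel f) where
  refl x := mem_connectedComponentIn rfl
  symm {x y} h := by
    rw [ReebRel, ← h.apply_eq, ← connectedComponentIn_eq h]
    exact mem_connectedComponentIn rfl
  trans {x y z} hxy hyz := by
    rwa [ReebRel, connectedComponentIn_eq hxy, hxy.apply_eq]

theorem preimage_quot_mk_reebRel_singleton (x : X) :
    Quot.mk (ReebRel f) ⁻¹' {Quot.mk (ReebRel f) x} = connectedComponentIn (f ⁻¹' {f x}) x := by
  ext y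
  rw [mem_preimage, mem_singleton_iff, eq_comm, Quot.eq, (ReebRel.equivalence f).eqvGen_iff]
  exact Iff.rfl

theorem isConnected_preimage_quot_mk_reebRel (y : Quot (ReebRel f)) :
    IsConnected (Quot.mk (ReebRel f) ⁻¹' {y}) := by
  obtain ⟨x, rfl⟩ := Quot.exists_rep y
  rw [preimage_quot_mk_reebRel_singleton]
  exact isConnected_connectedComponentIn_iff.mpr rfl

theorem continuous_reebTilde (hf : Continuous f) : Continuous (reebTilde f) :=
  continuous_quot_lift _ hf

/- The domain `Quot.mk _ ⁻¹' (reebTilde f ⁻¹' U)` of the restricted quotient map is `f ⁻¹' U`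
up to definitional unfolding of `reebTilde`. -/
noncomputable def reebComponentsEquiv (hf : Continuous f) {U : Set ℝ} (hU : IsOpen U) :
    ConnectedComponents (f ⁻¹' U) ≃ ConnectedComponents (reebTilde f ⁻¹' U) :=
  Equiv.ofBijective _ <| isQuotientMap_quot_mk.isCoinducing
    |>.connectedComponentsMap_restrictPreimage_bijective (hU.preimage (continuous_reebTilde f hf))
      fun y _ ↦ isConnected_preimage_quot_mk_reebRel f y

end Reeb

theorem stmt11 {X : Type u} [TopologicalSpace X] (f : X → ℝ) (hf : Continuous f) :
    ∃ η : reebPrecosheaf f ≅ reebPrecosheaf (reebTilde f),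
      ∀ (I : RInt) (x : X) (hx : x ∈ f ⁻¹' I.set),
        η.hom.app I (ConnectedComponents.mk ⟨x, hx⟩) =
          ConnectedComponents.mk ⟨Quot.mk (ReebRel f) x, hx⟩ := by
  refine ⟨NatIso.ofComponents (fun I ↦ (reebComponentsEquiv f hf isOpen_Ioo).toIso) ?_,
    fun I x hx ↦ rfl⟩
  intro I J h
  ext c
  obtain ⟨x, rfl⟩ := ConnectedComponents.surjective_coe c
  rfl
end

section
/- If H is a path deformation retraction of X in Y and f : X → ℝ is continuous, then the map induced by h₁ on Reeb graphs, Rb(h₁) : Rb(Y, f∘h₁) → Rb(X, f), is an isomorphism of ℝ-spaces with inverse Rb(ι) induced by the inclusion ι : X ↪ Y. -/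
open Set


/-! `Rb(ψ)` is a left inverse of `Rb(φ)` as soon as `ψ ∘ φ` moves no point out of its
Reeb class. For the retraction `h₁` and the inclusion `ι` this holds in one order because
`h₁ ∘ ι = id`, and in the other because `t ↦ H (y, t)` is a path from `y` to `h₁ y` along
which `f ∘ h₁` is constant, by `h₁ ∘ h_t = h₁`. -/

section Reeb

variable {X Z : Type*} [TopologicalSpace X] [TopologicalSpace Z]

theorem ReebRel.refl {f : X → ℝ} (x : X) : ReebRel f x x :=
  mem_connectedComponentIn rfl

theorem ReebRel.of_path {f : X → ℝ} {x y : X} (γ : Path x y) (hγ : ∀ t, f (γ t) = f x) :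
    ReebRel f x y :=
  (isPreconnected_range γ.continuous).subset_connectedComponentIn ⟨0, γ.source⟩
    (range_subset_iff.2 hγ) ⟨1, γ.target⟩

theorem ReebRel.map {f : X → ℝ} {g : Z → ℝ} {φ : X → Z} (hφ : Continuous φ)
    (hfg : ∀ x, g (φ x) = f x) {x y : X} (h : ReebRel f x y) : ReebRel g (φ x) (φ y) := by
  have himg : φ '' (f ⁻¹' {f x}) ⊆ g ⁻¹' {g (φ x)} := by
    rintro _ ⟨a, ha, rfl⟩
    simp only [mem_preimage, mem_singleton_iff] at ha ⊢
    rw [hfg, hfg, ha]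
  have hx : x ∈ f ⁻¹' {f x} := rfl
  exact connectedComponentIn_mono _ himg
    (hφ.continuousOn.image_connectedComponentIn_subset hx (mem_image_of_mem φ h))

def reebMap {f : X → ℝ} {g : Z → ℝ} (φ : X → Z) (hφ : Continuous φ)
    (hfg : ∀ x, g (φ x) = f x) : Quot (ReebRel f) → Quot (ReebRel g) :=
  Quot.lift (fun x => Quot.mk _ (φ x)) fun _ _ h => Quot.sound (h.map hφ hfg)

variable {f : X → ℝ} {g : Z → ℝ} {φ : X → Z} (hφ : Continuous φ) (hfg : ∀ x, g (φ x) = f x)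

theorem continuous_reebMap : Continuous (reebMap φ hφ hfg) :=
  continuous_quot_lift _ (continuous_quot_mk.comp hφ)

theorem reebTilde_comp_reebMap : reebTilde g ∘ reebMap φ hφ hfg = reebTilde f := by
  ext q
  induction q using Quot.ind
  exact hfg _

theorem reebMap_leftInverse {ψ : Z → X} (hψ : Continuous ψ) (hgf : ∀ z, f (ψ z) = g z)
    (h : ∀ x, ReebRel f x (ψ (φ x))) :
    Function.LeftInverse (reebMap ψ hψ hgf) (reebMap φ hφ hfg) := by
  intro q
  induction q using Quot.ind
  exact (Quot.sound (h _)).symm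

end Reeb

theorem stmt17_general {Y : Type*} [TopologicalSpace Y] (A : Set Y) (f : A → ℝ)
    (H : Y × unitInterval → Y) (hH : Continuous H)
    (h0 : ∀ y, H (y, 0) = y) (h1mem : ∀ y, H (y, 1) ∈ A)
    (h1fix : ∀ x ∈ A, H (x, 1) = x)
    (hpath : ∀ y t, H (H (y, t), 1) = H (y, 1)) :
    ∃ (Φ : Quot (ReebRel (fun z : Y => f ⟨H (z, 1), h1mem z⟩)) → Quot (ReebRel f))
      (Ψ : Quot (ReebRel f) → Quot (ReebRel (fun z : Y => f ⟨H (z, 1), h1mem z⟩))),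
      Continuous Φ ∧ Continuous Ψ ∧
      (∀ y : Y, Φ (Quot.mk (ReebRel (fun z : Y => f ⟨H (z, 1), h1mem z⟩)) y) =
        Quot.mk (ReebRel f) ⟨H (y, 1), h1mem y⟩) ∧
      (∀ a : A, Ψ (Quot.mk (ReebRel f) a) =
        Quot.mk (ReebRel (fun z : Y => f ⟨H (z, 1), h1mem z⟩)) (a : Y)) ∧
      Φ ∘ Ψ = id ∧ Ψ ∘ Φ = id ∧
      reebTilde f ∘ Φ = reebTilde (fun z : Y => f ⟨H (z, 1), h1mem z⟩) := by
  let r : Y → A := fun y => ⟨H (y, 1), h1mem y⟩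
  have hr : Continuous r := (hH.comp (continuous_id.prodMk continuous_const)).subtype_mk _
  have hr_val : ∀ a : A, r a = a := fun a => Subtype.ext (h1fix a a.2)
  have hfr : ∀ a : A, f (r a) = f a := fun a => congrArg f (hr_val a)
  let track (y : Y) : Path y (H (y, 1)) :=
    { toFun := fun t => H (y, t)
      continuous_toFun := hH.comp (continuous_const.prodMk continuous_id)
      source' := h0 y
      target' := rfl }
  have htrack : ∀ y t, f (r (track y t)) = f (r y) := fun y t =>
    congrArg f (Subtype.ext (hpath y t))
  refine ⟨reebMap r hr fun _ => rfl, reebMap Subtype.val continuous_subtype_val hfr,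
    continuous_reebMap .., continuous_reebMap .., fun _ => rfl, fun _ => rfl,
    (reebMap_leftInverse continuous_subtype_val hfr hr _ fun a =>
      (hr_val a).symm ▸ ReebRel.refl a).comp_eq_id,
    (reebMap_leftInverse hr _ continuous_subtype_val hfr fun y =>
      ReebRel.of_path (track y) (htrack y)).comp_eq_id,
    reebTilde_comp_reebMap ..⟩

theorem stmt17 {Y : Type*} [TopologicalSpace Y] (A : Set Y) (f : A → ℝ)
    (hf : Continuous f) (H : Y × unitInterval → Y) (hH : Continuous H)
    (h0 : ∀ y, H (y, 0) = y) (h1mem : ∀ y, H (y, 1) ∈ A)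
    (h1fix : ∀ x ∈ A, H (x, 1) = x)
    (hpath : ∀ y t, H (H (y, t), 1) = H (y, 1)) :
    ∃ (Φ : Quot (ReebRel (fun z : Y => f ⟨H (z, 1), h1mem z⟩)) → Quot (ReebRel f))
      (Ψ : Quot (ReebRel f) → Quot (ReebRel (fun z : Y => f ⟨H (z, 1), h1mem z⟩))),
      Continuous Φ ∧ Continuous Ψ ∧
      (∀ y : Y, Φ (Quot.mk (ReebRel (fun z : Y => f ⟨H (z, 1), h1mem z⟩)) y) =
        Quot.mk (ReebRel f) ⟨H (y, 1), h1mem y⟩) ∧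
      (∀ a : A, Ψ (Quot.mk (ReebRel f) a) =
        Quot.mk (ReebRel (fun z : Y => f ⟨H (z, 1), h1mem z⟩)) (a : Y)) ∧
      Φ ∘ Ψ = id ∧ Ψ ∘ Φ = id ∧
      reebTilde f ∘ Φ = reebTilde (fun z : Y => f ⟨H (z, 1), h1mem z⟩) :=
  stmt17_general A f H hH h0 h1mem h1fix hpath
end
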